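/- arXiv:2009.12184 — 4 statements merged into one kernel-verified Lean document; each statement's English description precedes it below -/
import Mathlib

section
/- Let G' be a bipartite graph with bipartition (A, B), and suppose G' has no vertex v ∈ A with N(v) = B, no vertex v ∈ B with N(v) = A, and no isolated vertices. Let G'' be the complement of G'. Then a set U ⊆ A ∪ B is a maximal biclique of G' containing at least one vertex of A and at least one vertex of B if and only if (A ∪ B) \ U is a minimal separator of G''. -/
/-!
In the complement `G'ᶜ` both sides `A` and `B` are cliques. Hence every component of
`G'ᶜ − S` meeting a side contains all of that side outside `S`, so two disjoint components
of `G'ᶜ − S` must be `A \ S` and `B \ S`. For `S = Uᶜ` these are `U ∩ A` and `U ∩ B`: no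
edge of `G'ᶜ` joins them exactly when `U` is a biclique, and every vertex of `Uᶜ` has a
`G'ᶜ`-neighbour in each of them exactly when no vertex can be added to `U`.
-/

open SimpleGraph

universe u

/-- The set of vertices outside `C` having a neighbor in `C`. -/
def nbhd {V : Type u} (G : SimpleGraph V) (C : Set V) : Set V :=
  {v | v ∉ C ∧ ∃ u ∈ C, G.Adj u v}

/-- `C` is a connected component of `G − S`. -/
def IsCompOf {V : Type u} (G : SimpleGraph V) (S C : Set V) : Prop :=
  C.Nonempty ∧ Disjoint C S ∧ (G.induce C).Connected ∧
    ∀ u ∈ C, ∀ v, G.Adj u v → v ∉ S → v ∈ C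

/-- `C` is a full component associated to `S`: a component of `G − S` with `N(C) = S`. -/
def IsFullCompOf {V : Type u} (G : SimpleGraph V) (S C : Set V) : Prop :=
  IsCompOf G S C ∧ nbhd G C = S

/-- `S` is a minimal separator of `G`:
`G − S` has at least two (distinct) full components associated to `S`. -/
def IsMinSep {V : Type u} (G : SimpleGraph V) (S : Set V) : Prop :=
  ∃ C₁ C₂ : Set V, C₁ ≠ C₂ ∧ IsFullCompOf G S C₁ ∧ IsFullCompOf G S C₂

/-- `U` is a biclique of a bipartite graph with bipartition `(A, B)`:
every vertex of `U ∩ A` is adjacent to every vertex of `U ∩ B`. -/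
def IsBicliqueOn {V : Type u} (G : SimpleGraph V) (A B U : Set V) : Prop :=
  ∀ a ∈ U ∩ A, ∀ b ∈ U ∩ B, G.Adj a b

open Set

variable {V : Type u}

section Components

variable {H : SimpleGraph V} {S C C' C₁ C₂ D K K' K₁ K₂ : Set V}

theorem IsCompOf.subset_of_mem (hC : IsCompOf H S C)
    (hD : ∀ u ∈ D, ∀ v, H.Adj u v → v ∉ S → v ∈ D) {c : V} (hcC : c ∈ C) (hcD : c ∈ D) :
    C ⊆ D := by
  intro w hw
  obtain ⟨p⟩ := hC.2.2.1.preconnected ⟨c, hcC⟩ ⟨w, hw⟩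
  suffices walk_mem : ∀ {x y : C}, (H.induce C).Walk x y → (x : V) ∈ D → (y : V) ∈ D from
    walk_mem p hcD
  intro x y p
  induction p with
  | nil => exact id
  | cons hxy _ ih => exact fun hx => ih (hD _ hx _ hxy (disjoint_left.mp hC.2.1 (Subtype.prop _)))

theorem IsCompOf.disjoint_of_ne (h₁ : IsCompOf H S C₁) (h₂ : IsCompOf H S C₂) (hne : C₁ ≠ C₂) :
    Disjoint C₁ C₂ :=
  disjoint_left.mpr fun _ hv₁ hv₂ =>
    hne <| (h₁.subset_of_mem h₂.2.2.2 hv₁ hv₂).antisymm (h₂.subset_of_mem h₁.2.2.2 hv₂ hv₁)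

theorem SimpleGraph.IsClique.induce_connected (hK : H.IsClique K) (hne : K.Nonempty) :
    (H.induce K).Connected := by
  have := hne.to_subtype
  rw [induce_eq_top.mpr hK]
  exact connected_top

theorem IsCompOf.diff_subset_of_isClique (hC : IsCompOf H S C) (hK : H.IsClique K) {c : V}
    (hcC : c ∈ C) (hcK : c ∈ K) : K \ S ⊆ C := by
  rintro v ⟨hvK, hvS⟩
  by_cases hcv : c = v
  · exact hcv ▸ hcC
  · exact hC.2.2.2 c hcC v (hK hcK hvK hcv) hvS

theorem IsCompOf.eq_diff_of_isCompl_isClique (hC : IsCompOf H S C) (hC' : IsCompOf H S C')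
    (hdisj : Disjoint C C') (hKK' : IsCompl K K') (hK : H.IsClique K) (hK' : H.IsClique K')
    {c : V} (hcC : c ∈ C) (hcK : c ∈ K) : C = K \ S ∧ C' = K' \ S := by
  have hKC : K \ S ⊆ C := hC.diff_subset_of_isClique hK hcC hcK
  obtain ⟨d, hdC'⟩ := hC'.1
  have hdK : d ∉ K := fun hdK =>
    disjoint_left.mp hdisj (hKC ⟨hdK, disjoint_left.mp hC'.2.1 hdC'⟩) hdC'
  have hK'C' : K' \ S ⊆ C' := hC'.diff_subset_of_isClique hK' hdC' (hKK'.compl_eq.subset hdK)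
  refine ⟨Subset.antisymm (fun v hv => ?_) hKC, Subset.antisymm (fun v hv => ?_) hK'C'⟩
  · have hvS : v ∉ S := disjoint_left.mp hC.2.1 hv
    refine ⟨by_contra fun hvK => ?_, hvS⟩
    exact disjoint_left.mp hdisj hv (hK'C' ⟨hKK'.compl_eq.subset hvK, hvS⟩)
  · have hvS : v ∉ S := disjoint_left.mp hC'.2.1 hv
    refine ⟨by_contra fun hvK' => ?_, hvS⟩
    exact disjoint_right.mp hdisj hv (hKC ⟨hKK'.symm.compl_eq.subset hvK', hvS⟩)

theorem IsMinSep.isFullCompOf_diff (hS : IsMinSep H S) (hK : IsCompl K₁ K₂)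
    (h₁ : H.IsClique K₁) (h₂ : H.IsClique K₂) :
    IsFullCompOf H S (K₁ \ S) ∧ IsFullCompOf H S (K₂ \ S) := by
  obtain ⟨C₁, C₂, hne, hC₁, hC₂⟩ := hS
  have hdisj := hC₁.1.disjoint_of_ne hC₂.1 hne
  obtain ⟨c, hc⟩ := hC₁.1.1
  by_cases hcK : c ∈ K₁
  · obtain ⟨rfl, rfl⟩ := hC₁.1.eq_diff_of_isCompl_isClique hC₂.1 hdisj hK h₁ h₂ hc hcK
    exact ⟨hC₁, hC₂⟩
  · obtain ⟨rfl, rfl⟩ := hC₁.1.eq_diff_of_isCompl_isClique hC₂.1 hdisj hK.symm h₂ h₁ hc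
      (hK.compl_eq.subset hcK)
    exact ⟨hC₂, hC₁⟩

end Components

section Bicliques

variable {G : SimpleGraph V} {A B U : Set V}

def NotExtendableOn (G : SimpleGraph V) (A B U : Set V) : Prop :=
  ∀ s ∈ B, s ∉ U → ∃ a ∈ U ∩ A, ¬ G.Adj a s

theorem IsBicliqueOn.symm (hU : IsBicliqueOn G A B U) : IsBicliqueOn G B A U :=
  fun b hb a ha => (hU a ha b hb).symm

theorem IsBicliqueOn.insert (hU : IsBicliqueOn G A B U) (hAB : Disjoint A B) {s : V}
    (hs : s ∈ B) (hadj : ∀ a ∈ U ∩ A, G.Adj a s) : IsBicliqueOn G A B (insert s U) := by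
  rintro a ⟨rfl | haU, haA⟩ b ⟨rfl | hbU, hbB⟩
  · exact absurd hs (disjoint_left.mp hAB haA)
  · exact absurd hs (disjoint_left.mp hAB haA)
  · exact hadj a ⟨haU, haA⟩
  · exact hU a ⟨haU, haA⟩ b ⟨hbU, hbB⟩

theorem IsBicliqueOn.notExtendableOn (hU : IsBicliqueOn G A B U) (hAB : Disjoint A B)
    (hmax : ∀ W, IsBicliqueOn G A B W → U ⊆ W → W = U) : NotExtendableOn G A B U := by
  intro s hs hsU
  by_contra! hadj
  exact hsU (hmax _ (hU.insert hAB hs hadj) (subset_insert s U) ▸ mem_insert s U)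

theorem IsBicliqueOn.maximal_iff (hU : IsBicliqueOn G A B U) (hAB : IsCompl A B) :
    (∀ W, IsBicliqueOn G A B W → U ⊆ W → W = U) ↔
      NotExtendableOn G A B U ∧ NotExtendableOn G B A U := by
  refine ⟨fun hmax => ⟨hU.notExtendableOn hAB.disjoint hmax,
    hU.symm.notExtendableOn hAB.symm.disjoint fun W hW => hmax W hW.symm⟩, ?_⟩
  rintro ⟨hextA, hextB⟩ W hW hUW
  refine (hUW.antisymm fun s hsW => by_contra fun hsU => ?_).symm
  by_cases hsA : s ∈ A
  · obtain ⟨b, hb, hbs⟩ := hextB s hsA hsU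
    exact hbs (hW s ⟨hsW, hsA⟩ b ⟨hUW hb.1, hb.2⟩).symm
  · have hsB : s ∈ B := hAB.compl_eq.subset hsA
    obtain ⟨a, ha, has⟩ := hextA s hsB hsU
    exact has (hW a ⟨hUW ha.1, ha.2⟩ s ⟨hsW, hsB⟩)

theorem isFullCompOf_compl_inter_iff (hAB : IsCompl A B) (hA : G.IsIndepSet A)
    (hne : (U ∩ A).Nonempty) :
    IsFullCompOf Gᶜ Uᶜ (U ∩ A) ↔ IsBicliqueOn G A B U ∧ NotExtendableOn G A B U := by
  have hne_of_mem : ∀ {x y : V}, x ∈ U → y ∉ U → x ≠ y := fun hx hy hxy => hy (hxy ▸ hx)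
  constructor
  · rintro ⟨⟨-, -, -, hclosed⟩, hnbhd⟩
    refine ⟨fun a ha b hb => by_contra fun hab => ?_, fun s hs hsU => ?_⟩
    · have hne_ab : a ≠ b := fun h => disjoint_left.mp hAB.disjoint ha.2 (h ▸ hb.2)
      have hbA := hclosed a ha b ((compl_adj G a b).mpr ⟨hne_ab, hab⟩) (not_not.mpr hb.1)
      exact disjoint_left.mp hAB.disjoint hbA.2 hb.2
    · obtain ⟨-, a, ha, has⟩ := hnbhd.superset hsU
      exact ⟨a, ha, ((compl_adj G a s).mp has).2⟩
  rintro ⟨hU, hext⟩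
  obtain ⟨a₀, ha₀⟩ := hne
  have hAc : Gᶜ.IsClique A := (isClique_compl G).mpr hA
  refine ⟨⟨⟨a₀, ha₀⟩, disjoint_compl_right.mono_left inter_subset_left,
    (hAc.subset inter_subset_right).induce_connected ⟨a₀, ha₀⟩, ?_⟩, ?_⟩
  · intro a ha v hav hv
    have hvU : v ∈ U := not_not.mp hv
    refine ⟨hvU, by_contra fun hvA => ?_⟩
    exact ((compl_adj G a v).mp hav).2 (hU a ha v ⟨hvU, hAB.compl_eq.subset hvA⟩)
  · ext s
    refine ⟨fun ⟨hs, a, ha, has⟩ hsU => ?_, fun hsU => ⟨fun h => hsU h.1, ?_⟩⟩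
    · have hsB : s ∈ B := hAB.compl_eq.subset fun hsA => hs ⟨hsU, hsA⟩
      exact ((compl_adj G a s).mp has).2 (hU a ha s ⟨hsU, hsB⟩)
    · by_cases hsA : s ∈ A
      · exact ⟨a₀, ha₀, hAc ha₀.2 hsA (hne_of_mem ha₀.1 hsU)⟩
      · obtain ⟨a, ha, has⟩ := hext s (hAB.compl_eq.subset hsA) hsU
        exact ⟨a, ha, (compl_adj G a s).mpr ⟨hne_of_mem ha.1 hsU, has⟩⟩

theorem isMinSep_compl_iff (hAB : IsCompl A B) (hA : G.IsIndepSet A) (hB : G.IsIndepSet B) :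
    IsMinSep Gᶜ Uᶜ ↔ IsFullCompOf Gᶜ Uᶜ (U ∩ A) ∧ IsFullCompOf Gᶜ Uᶜ (U ∩ B) := by
  refine ⟨fun hS => ?_, fun ⟨h₁, h₂⟩ => ⟨_, _, fun heq => ?_, h₁, h₂⟩⟩
  · simpa only [sdiff_compl, inter_comm] using
      hS.isFullCompOf_diff hAB ((isClique_compl G).mpr hA) ((isClique_compl G).mpr hB)
  · obtain ⟨a, ha⟩ := h₁.1.1
    exact disjoint_left.mp hAB.disjoint ha.2 (heq ▸ ha).2

end Bicliques

theorem stmt3_general {V : Type u} (G' : SimpleGraph V) (A B : Set V)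
    (hAB : B = Aᶜ)
    (hbip : ∀ u v, G'.Adj u v → (u ∈ A ∧ v ∈ B) ∨ (u ∈ B ∧ v ∈ A))
    (U : Set V) :
    (IsBicliqueOn G' A B U ∧ (U ∩ A).Nonempty ∧ (U ∩ B).Nonempty ∧
        ∀ W, IsBicliqueOn G' A B W → U ⊆ W → W = U) ↔
      IsMinSep G'ᶜ Uᶜ := by
  have hcompl : IsCompl A B := hAB ▸ isCompl_compl
  have hA : G'.IsIndepSet A := fun x hx y hy _ hxy => by
    rcases hbip x y hxy with ⟨-, h⟩ | ⟨h, -⟩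
    exacts [disjoint_left.mp hcompl.disjoint hy h, disjoint_left.mp hcompl.disjoint hx h]
  have hB : G'.IsIndepSet B := fun x hx y hy _ hxy => by
    rcases hbip x y hxy with ⟨h, -⟩ | ⟨-, h⟩
    exacts [disjoint_left.mp hcompl.disjoint h hx, disjoint_left.mp hcompl.disjoint h hy]
  rw [isMinSep_compl_iff hcompl hA hB]
  constructor
  · rintro ⟨hU, hUA, hUB, hmax⟩
    obtain ⟨hextA, hextB⟩ := (hU.maximal_iff hcompl).mp hmax
    exact ⟨(isFullCompOf_compl_inter_iff hcompl hA hUA).mpr ⟨hU, hextA⟩,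
      (isFullCompOf_compl_inter_iff hcompl.symm hB hUB).mpr ⟨hU.symm, hextB⟩⟩
  · rintro ⟨h₁, h₂⟩
    obtain ⟨hU, hextA⟩ := (isFullCompOf_compl_inter_iff hcompl hA h₁.1.1).mp h₁
    obtain ⟨-, hextB⟩ := (isFullCompOf_compl_inter_iff hcompl.symm hB h₂.1.1).mp h₂
    exact ⟨hU, h₁.1.1, h₂.1.1, (hU.maximal_iff hcompl).mpr ⟨hextA, hextB⟩⟩

/-- Let `G'` be a bipartite graph with bipartition `(A, B)`, with no vertex of `A`
adjacent to all of `B`, no vertex of `B` adjacent to all of `A`, and no isolated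
vertices. Let `G''` be the complement of `G'`. Then `U` is a maximal biclique of `G'`
containing a vertex of `A` and a vertex of `B` iff `(A ∪ B) \ U` is a minimal
separator of `G''`. -/
theorem stmt3 {V : Type u} [Fintype V] (G' : SimpleGraph V) (A B : Set V)
    (hAB : B = Aᶜ)
    (hbip : ∀ u v, G'.Adj u v → (u ∈ A ∧ v ∈ B) ∨ (u ∈ B ∧ v ∈ A))
    (hA : ¬ ∃ v ∈ A, ∀ b ∈ B, G'.Adj v b)
    (hB : ¬ ∃ v ∈ B, ∀ a ∈ A, G'.Adj v a)
    (hnoiso : ∀ v : V, ∃ w, G'.Adj v w)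
    (U : Set V) :
    (IsBicliqueOn G' A B U ∧ (U ∩ A).Nonempty ∧ (U ∩ B).Nonempty ∧
        ∀ W, IsBicliqueOn G' A B W → U ⊆ W → W = U) ↔
      IsMinSep G'ᶜ Uᶜ :=
  stmt3_general G' A B hAB hbip U
end

section
/- Let G be a connected graph and L(G) its line graph. If G' is a line graph and S is a minimal separator of G', then G' − S has exactly two connected components, both of which are full components associated to S. -/
open SimpleGraph

universe u

/-!
A third component `C` of `G' − S` would, by connectivity, be joined to some `q ∈ S` by an edge
`pq` with `p ∈ C`. Since `S` is the neighbourhood of both full components, `q` also has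
neighbours `a ∈ C₁` and `b ∈ C₂`; as `a`, `b`, `p` lie in distinct components of `G' − S`, they
are pairwise distinct and non-adjacent, so `q; a, b, p` is a claw. Line graphs have none: each
neighbour of the edge `q = xy` contains `x` or `y`, so two of `a, b, p` share an endpoint.
-/

section Components

variable {V : Type u} {H : SimpleGraph V} {S C C' : Set V} {x y : V}

lemma IsCompOf.subset_of_mem_s5 (hC : IsCompOf H S C) (hC' : IsCompOf H S C')
    (hx : x ∈ C) (hx' : x ∈ C') : C' ⊆ C := by
  obtain ⟨-, hdisj', hconn', -⟩ := hC'
  suffices h : ∀ a b : C', (H.induce C').Walk a b → ↑a ∈ C → ↑b ∈ C from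
    fun y hy => h _ _ (hconn' ⟨x, hx'⟩ ⟨y, hy⟩).some hx
  intro a b p
  induction p with
  | nil => exact id
  | @cons a b _ hab _ ih =>
    exact fun ha => ih (hC.2.2.2 a ha b hab fun hb => hdisj'.ne_of_mem b.2 hb rfl)

lemma IsCompOf.eq_of_mem (hC : IsCompOf H S C) (hC' : IsCompOf H S C')
    (hx : x ∈ C) (hx' : x ∈ C') : C = C' :=
  (hC'.subset_of_mem_s5 hC hx' hx).antisymm (hC.subset_of_mem_s5 hC' hx hx')

lemma IsCompOf.ne_of_ne (hC : IsCompOf H S C) (hC' : IsCompOf H S C') (hne : C ≠ C')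
    (hx : x ∈ C) (hy : y ∈ C') : x ≠ y := by
  rintro rfl
  exact hne (hC.eq_of_mem hC' hx hy)

lemma IsCompOf.not_adj_of_ne (hC : IsCompOf H S C) (hC' : IsCompOf H S C') (hne : C ≠ C')
    (hx : x ∈ C) (hy : y ∈ C') : ¬ H.Adj x y := fun hxy =>
  hC.ne_of_ne hC' hne (hC.2.2.2 x hx y hxy fun hyS => hC'.2.1.ne_of_mem hy hyS rfl) hy rfl

lemma IsCompOf.exists_adj_of_preconnected (hH : H.Preconnected) (hC : IsCompOf H S C)
    (hy : y ∉ C) : ∃ p ∈ C, ∃ q ∈ S, H.Adj p q := by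
  obtain ⟨x, hx⟩ := hC.1
  obtain ⟨d, -, hd, hd'⟩ := (hH x y).some.exists_boundary_dart C hx hy
  by_contra! h
  exact hd' (hC.2.2.2 _ hd _ d.adj fun hq => h _ hd _ hq d.adj)

end Components

/-- No induced `K_{1,3}`. -/
def SimpleGraph.IsClawFree {V : Type u} (H : SimpleGraph V) : Prop :=
  ∀ ⦃s a b c : V⦄, H.Adj s a → H.Adj s b → H.Adj s c → a ≠ b → a ≠ c → b ≠ c →
    H.Adj a b ∨ H.Adj a c ∨ H.Adj b c

theorem SimpleGraph.IsClawFree.eq_or_eq_of_isFullCompOf {V : Type u} {H : SimpleGraph V}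
    {S C C₁ C₂ : Set V} (hH : H.IsClawFree) (hconn : H.Preconnected) (hne : C₁ ≠ C₂)
    (h₁ : IsFullCompOf H S C₁) (h₂ : IsFullCompOf H S C₂) (hC : IsCompOf H S C) :
    C = C₁ ∨ C = C₂ := by
  by_contra! h
  obtain ⟨hC₁, hC₂⟩ := h
  obtain ⟨x, hx⟩ := h₁.1.1
  obtain ⟨p, hp, q, hq, hpq⟩ :=
    hC.exists_adj_of_preconnected hconn (h₁.1.ne_of_ne hC hC₁.symm hx · rfl)
  obtain ⟨-, a, ha, haq⟩ : q ∈ nbhd H C₁ := h₁.2 ▸ hq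
  obtain ⟨-, b, hb, hbq⟩ : q ∈ nbhd H C₂ := h₂.2 ▸ hq
  rcases hH haq.symm hbq.symm hpq.symm (h₁.1.ne_of_ne h₂.1 hne ha hb)
    (h₁.1.ne_of_ne hC hC₁.symm ha hp) (h₂.1.ne_of_ne hC hC₂.symm hb hp) with
    hab | hap | hbp
  · exact h₁.1.not_adj_of_ne h₂.1 hne ha hb hab
  · exact h₁.1.not_adj_of_ne hC hC₁.symm ha hp hap
  · exact h₂.1.not_adj_of_ne hC hC₂.symm hb hp hbp

namespace SimpleGraph

variable {V : Type u} {G : SimpleGraph V}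

theorem lineGraph_isClawFree (G : SimpleGraph V) : G.lineGraph.IsClawFree := by
  rintro ⟨s, hs⟩ a b c hsa hsb hsc hab hac hbc
  obtain ⟨-, va, hva, hva'⟩ := lineGraph_adj_iff_exists.1 hsa
  obtain ⟨-, vb, hvb, hvb'⟩ := lineGraph_adj_iff_exists.1 hsb
  obtain ⟨-, vc, hvc, hvc'⟩ := lineGraph_adj_iff_exists.1 hsc
  have shared {e f : G.edgeSet} {v : V} (he : v ∈ (e : Sym2 V)) (hf : v ∈ (f : Sym2 V))
      (hne : e ≠ f) : G.lineGraph.Adj e f :=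
    lineGraph_adj_iff_exists.2 ⟨hne, v, he, hf⟩
  induction s using Sym2.ind with
  | h x y =>
    simp only [Sym2.mem_iff] at hva hvb hvc
    rcases hva with rfl | rfl <;> rcases hvb with rfl | rfl <;> rcases hvc with rfl | rfl <;>
      first
      | exact .inl (shared hva' hvb' hab)
      | exact .inr (.inl (shared hva' hvc' hac))
      | exact .inr (.inr (shared hvb' hvc' hbc))

lemma lineGraph_reachable_of_mem {e f : G.edgeSet} {v : V} (he : v ∈ (e : Sym2 V))
    (hf : v ∈ (f : Sym2 V)) : G.lineGraph.Reachable e f := by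
  by_cases h : e = f
  · exact h ▸ .refl e
  · exact (lineGraph_adj_iff_exists.2 ⟨h, v, he, hf⟩).reachable

lemma Walk.lineGraph_reachable {x y : V} (p : G.Walk x y) {e f : G.edgeSet}
    (he : x ∈ (e : Sym2 V)) (hf : y ∈ (f : Sym2 V)) : G.lineGraph.Reachable e f := by
  induction p generalizing e with
  | nil => exact lineGraph_reachable_of_mem he hf
  | cons hadj _ ih =>
    exact (lineGraph_reachable_of_mem (f := ⟨_, hadj⟩) he (Sym2.mem_mk_left _ _)).trans
      (ih (Sym2.mem_mk_right _ _) hf)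

lemma Preconnected.lineGraph (h : G.Preconnected) : G.lineGraph.Preconnected := fun _ _ =>
  (h _ _).some.lineGraph_reachable (Sym2.out_fst_mem _) (Sym2.out_fst_mem _)

end SimpleGraph

theorem stmt5_general {V : Type u} (G : SimpleGraph V) (hconn : G.Connected)
    (S : Set G.edgeSet) (hS : IsMinSep G.lineGraph S) :
    ∃ C₁ C₂ : Set G.edgeSet, C₁ ≠ C₂ ∧
      IsFullCompOf G.lineGraph S C₁ ∧ IsFullCompOf G.lineGraph S C₂ ∧
      ∀ C, IsCompOf G.lineGraph S C → C = C₁ ∨ C = C₂ := by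
  obtain ⟨C₁, C₂, hne, h₁, h₂⟩ := hS
  exact ⟨C₁, C₂, hne, h₁, h₂, fun _ hC => G.lineGraph_isClawFree.eq_or_eq_of_isFullCompOf
    hconn.preconnected.lineGraph hne h₁ h₂ hC⟩

/-- Let `G` be a connected graph and `G' = L(G)` its line graph. If `S` is a minimal
separator of `G'`, then `G' − S` has exactly two connected components, both of which
are full components associated to `S`. -/
theorem stmt5 {V : Type u} [Fintype V] (G : SimpleGraph V) (hconn : G.Connected)
    (S : Set G.edgeSet) (hS : IsMinSep G.lineGraph S) :
    ∃ C₁ C₂ : Set G.edgeSet, C₁ ≠ C₂ ∧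
      IsFullCompOf G.lineGraph S C₁ ∧ IsFullCompOf G.lineGraph S C₂ ∧
      ∀ C, IsCompOf G.lineGraph S C → C = C₁ ∨ C = C₂ :=
  stmt5_general G hconn S hS
end

section
/- Let S be a minimal separator of a graph G and C a component of G − S. Let G(C, S) denote the graph obtained from G[C ∪ S] by adding all edges between pairs of vertices of S (completing S into a clique). Then every minimal separator of G(C, S) is also a minimal separator of G. -/
open SimpleGraph

universe u

/-- The graph `G(C, S)`: the induced subgraph `G[C ∪ S]` with `S` completed into a clique. -/
def GCS {V : Type u} (G : SimpleGraph V) (C S : Set V) : SimpleGraph ↥(C ∪ S) where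
  Adj x y := G.Adj x y ∨ ((x : V) ∈ S ∧ (y : V) ∈ S ∧ x ≠ y)
  symm := by
    constructor
    rintro x y (h | ⟨h1, h2, h3⟩)
    · exact Or.inl h.symm
    · exact Or.inr ⟨h2, h1, h3.symm⟩
  loopless := by
    constructor
    rintro x (h | ⟨_, _, h⟩)
    · exact G.irrefl h
    · exact h rfl

/-!
A full component of `G(C, S) − S'` avoiding `S` lies in `C`, where `G(C, S)` and `G` have the
same edges, so it is already a full component of `G − S'`. As `S` is a clique of `G(C, S)`, at
most one full component of `G(C, S) − S'` meets `S`. If one does, pick a full component `D` of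
`G − S` other than `C`: `D`, `S \ S'` and that component lie in a single component of `G − S'`,
which is full because every clique edge inside `S` can be rerouted through `D`.
-/

section Components

variable {α : Type u} {G : SimpleGraph α}

lemma subset_of_induce_connected {A B : Set α} (hA : (G.induce A).Connected) {a : α}
    (haA : a ∈ A) (haB : a ∈ B) (hB : ∀ u ∈ A, ∀ v ∈ A, G.Adj u v → u ∈ B → v ∈ B) :
    A ⊆ B := by
  have walk_mem : ∀ {x y : ↥A} (_ : (G.induce A).Walk x y), (x : α) ∈ B → (y : α) ∈ B := by
    intro x y w
    induction w with
    | nil => exact id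
    | cons h _ ih => exact fun hx => ih (hB _ (Subtype.property _) _ (Subtype.property _) h hx)
  intro v hv
  obtain ⟨w⟩ := hA.preconnected ⟨a, haA⟩ ⟨v, hv⟩
  exact walk_mem w haB

variable {S C D : Set α}

lemma IsCompOf.subset_of_mem_s9 (hC : IsCompOf G S C) (hD : IsCompOf G S D) {u : α}
    (huC : u ∈ C) (huD : u ∈ D) : C ⊆ D :=
  subset_of_induce_connected hC.2.2.1 huC huD fun _ _ v hv hadj hu =>
    hD.2.2.2 _ hu v hadj (Set.disjoint_left.mp hC.2.1 hv)

lemma IsCompOf.eq_of_mem_s9 (hC : IsCompOf G S C) (hD : IsCompOf G S D) {u : α}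
    (huC : u ∈ C) (huD : u ∈ D) : C = D :=
  (hC.subset_of_mem_s9 hD huC huD).antisymm (hD.subset_of_mem_s9 hC huD huC)

lemma IsCompOf.eq_of_adj (hC : IsCompOf G S C) (hD : IsCompOf G S D) {u v : α}
    (hu : u ∈ C) (hv : v ∈ D) (hadj : G.Adj u v) : C = D :=
  hC.eq_of_mem_s9 hD (hC.2.2.2 u hu v hadj (Set.disjoint_left.mp hD.2.1 hv)) hv

lemma IsCompOf.adj_mem_union (hC : IsCompOf G S C) {u v : α} (hu : u ∈ C)
    (hadj : G.Adj u v) : v ∈ C ∪ S := by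
  by_cases hv : v ∈ S
  · exact Or.inr hv
  · exact Or.inl (hC.2.2.2 u hu v hadj hv)

lemma IsMinSep.exists_isFullCompOf_disjoint (hS : IsMinSep G S) (hC : IsCompOf G S C) :
    ∃ D, IsFullCompOf G S D ∧ Disjoint D C := by
  obtain ⟨C₁, C₂, hne, hC₁, hC₂⟩ := hS
  by_contra! h
  obtain ⟨u₁, hu₁, hu₁C⟩ := Set.not_disjoint_iff.mp (h C₁ hC₁)
  obtain ⟨u₂, hu₂, hu₂C⟩ := Set.not_disjoint_iff.mp (h C₂ hC₂)
  exact hne ((hC₁.1.eq_of_mem_s9 hC hu₁ hu₁C).trans (hC.eq_of_mem_s9 hC₂.1 hu₂C hu₂))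

end Components

section CompOf

variable {α : Type u} {G : SimpleGraph α} {T : Set α} {x u v : α}

/-- The component of `G − T` containing `x`; it degenerates to `{x}` when `x ∈ T`. -/
def compOf (G : SimpleGraph α) (T : Set α) (x : α) : Set α :=
  {v | Relation.ReflTransGen (fun a b => G.Adj a b ∧ a ∉ T ∧ b ∉ T) x v}

lemma mem_compOf_self : x ∈ compOf G T x := Relation.ReflTransGen.refl

lemma notMem_of_mem_compOf (hx : x ∉ T) (hv : v ∈ compOf G T x) : v ∉ T := by
  induction hv with
  | refl => exact hx
  | tail _ hbc _ => exact hbc.2.2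

lemma mem_compOf_of_adj (hx : x ∉ T) (hu : u ∈ compOf G T x) (hadj : G.Adj u v)
    (hv : v ∉ T) : v ∈ compOf G T x :=
  hu.tail ⟨hadj, notMem_of_mem_compOf hx hu, hv⟩

lemma isCompOf_compOf (hx : x ∉ T) : IsCompOf G T (compOf G T x) := by
  refine ⟨⟨x, mem_compOf_self⟩, Set.disjoint_left.mpr fun _ => notMem_of_mem_compOf hx,
    ?_, fun u hu v hadj hv => mem_compOf_of_adj hx hu hadj hv⟩
  have reachable : ∀ {v} (hv : v ∈ compOf G T x),
      (G.induce (compOf G T x)).Reachable ⟨x, mem_compOf_self⟩ ⟨v, hv⟩ := by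
    intro v hv
    induction hv with
    | refl => rfl
    | @tail b c hb hbc ih =>
      exact ih.trans (Adj.reachable (G := G.induce (compOf G T x))
        (u := ⟨b, hb⟩) (v := ⟨c, hb.tail hbc⟩) hbc.1)
  have : Nonempty ↥(compOf G T x) := ⟨⟨x, mem_compOf_self⟩⟩
  exact ⟨fun a b => (reachable a.2).symm.trans (reachable b.2)⟩

lemma isFullCompOf_compOf (hx : x ∉ T) (hT : ∀ t ∈ T, ∃ v ∈ compOf G T x, G.Adj v t) :
    IsFullCompOf G T (compOf G T x) := by
  refine ⟨isCompOf_compOf hx, Set.Subset.antisymm ?_ fun t ht => ?_⟩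
  · rintro v ⟨hv, u, hu, hadj⟩
    by_contra hvT
    exact hv (mem_compOf_of_adj hx hu hadj hvT)
  · obtain ⟨v, hv, hadj⟩ := hT t ht
    exact ⟨fun h => notMem_of_mem_compOf hx h ht, v, hv, hadj⟩

lemma IsFullCompOf.union_diff_subset_compOf {S D : Set α} (hD : IsFullCompOf G S D)
    (hDT : Disjoint D T) (hxS : x ∈ S) (hx : x ∉ T) : D ∪ S \ T ⊆ compOf G T x := by
  have hDnbhd : ∀ s ∈ S, ∃ d ∈ D, G.Adj d s := fun s hs => (hD.2 ▸ hs : s ∈ nbhd G D).2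
  obtain ⟨d₀, hd₀, hd₀x⟩ := hDnbhd x hxS
  have hd₀T : d₀ ∉ T := Set.disjoint_left.mp hDT hd₀
  have hDsub : D ⊆ compOf G T x :=
    subset_of_induce_connected hD.1.2.2.1 hd₀
      (mem_compOf_of_adj hx mem_compOf_self hd₀x.symm hd₀T)
      fun _ _ v hv hadj hu => mem_compOf_of_adj hx hu hadj (Set.disjoint_left.mp hDT hv)
  rintro v (hv | ⟨hvS, hvT⟩)
  · exact hDsub hv
  · obtain ⟨d, hd, hdv⟩ := hDnbhd v hvS
    exact mem_compOf_of_adj hx (hDsub hd) hdv hvT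

end CompOf

section GCS

variable {V : Type u} {G : SimpleGraph V} {S C : Set V} {S' E : Set ↥(C ∪ S)}

lemma gcs_adj_iff_of_notMem {x y : ↥(C ∪ S)} (hx : (x : V) ∉ S) :
    (GCS G C S).Adj x y ↔ G.Adj x y :=
  ⟨fun h => h.resolve_right fun h' => hx h'.1, Or.inl⟩

lemma IsCompOf.image_val_of_notMem (hE : IsCompOf (GCS G C S) S' E)
    (hC : IsCompOf G S C) (hES : ∀ e ∈ E, (e : V) ∉ S) :
    IsCompOf G (Subtype.val '' S') (Subtype.val '' E) := by
  refine ⟨hE.1.image _, ?_, ?_, ?_⟩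
  · rw [Set.disjoint_image_iff Subtype.val_injective]
    exact hE.2.1
  · let f : (GCS G C S).induce E →g G.induce (Subtype.val '' E) :=
      { toFun := fun e => ⟨e.1, e.1, e.2, rfl⟩
        map_rel' := fun {a _} h => (gcs_adj_iff_of_notMem (hES _ a.2)).mp h }
    have : Nonempty ↥E := hE.1.to_subtype
    refine hE.2.2.1.map f ?_
    rintro ⟨_, e, he, rfl⟩
    exact ⟨⟨e, he⟩, rfl⟩
  · rintro _ ⟨e, he, rfl⟩ v hadj hv
    have hvCS := hC.adj_mem_union (e.2.resolve_right (hES e he)) hadj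
    refine ⟨⟨v, hvCS⟩, hE.2.2.2 e he _ (Or.inl hadj) fun h => hv ⟨_, h, rfl⟩, rfl⟩

lemma IsFullCompOf.image_val_of_notMem (hC : IsCompOf G S C)
    (hE : IsFullCompOf (GCS G C S) S' E) (hES : ∀ e ∈ E, (e : V) ∉ S) :
    IsFullCompOf G (Subtype.val '' S') (Subtype.val '' E) := by
  refine ⟨hE.1.image_val_of_notMem hC hES, Set.Subset.antisymm ?_ ?_⟩
  · rintro v ⟨hv, _, ⟨e, he, rfl⟩, hadj⟩
    have hvCS := hC.adj_mem_union (e.2.resolve_right (hES e he)) hadj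
    refine ⟨⟨v, hvCS⟩, hE.2 ▸ ⟨fun h => hv ⟨_, h, rfl⟩, e, he, Or.inl hadj⟩, rfl⟩
  · rintro _ ⟨t, ht, rfl⟩
    obtain ⟨htE, e, he, hadj⟩ := (hE.2 ▸ ht : t ∈ nbhd (GCS G C S) E)
    exact ⟨fun h => htE (Subtype.val_injective.mem_set_image.mp h), e, ⟨e, he, rfl⟩,
      (gcs_adj_iff_of_notMem (hES e he)).mp hadj⟩

lemma IsCompOf.notMem_of_ne {E₁ E₂ : Set ↥(C ∪ S)} (hE₁ : IsCompOf (GCS G C S) S' E₁)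
    (hE₂ : IsCompOf (GCS G C S) S' E₂) (hne : E₁ ≠ E₂) {a : ↥(C ∪ S)} (ha : a ∈ E₁)
    (haS : (a : V) ∈ S) : ∀ b ∈ E₂, (b : V) ∉ S := by
  intro b hb hbS
  by_cases hab : a = b
  · exact hne (hE₁.eq_of_mem_s9 hE₂ ha (hab ▸ hb))
  · exact hne (hE₁.eq_of_adj hE₂ ha hb (Or.inr ⟨haS, hbS, hab⟩))

lemma IsCompOf.image_val_subset_compOf (hE : IsCompOf (GCS G C S) S' E) {s₀ : ↥(C ∪ S)}
    (hs₀ : s₀ ∈ E) (hSB : S \ Subtype.val '' S' ⊆ compOf G (Subtype.val '' S') s₀) :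
    Subtype.val '' E ⊆ compOf G (Subtype.val '' S') s₀ := by
  have hES' : ∀ e ∈ E, (e : V) ∉ Subtype.val '' S' := fun e he h =>
    Set.disjoint_left.mp hE.2.1 he (Subtype.val_injective.mem_set_image.mp h)
  have hsub : E ⊆ Subtype.val ⁻¹' compOf G (Subtype.val '' S') s₀ := by
    refine subset_of_induce_connected hE.2.2.1 hs₀ mem_compOf_self ?_
    rintro u hu v hv (hadj | ⟨-, hvS, -⟩) huB
    · exact mem_compOf_of_adj (hES' s₀ hs₀) huB hadj (hES' v hv)
    · exact hSB ⟨hvS, hES' v hv⟩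
  exact Set.image_subset_iff.mpr hsub

lemma isFullCompOf_compOf_of_mem {D : Set V} (hD : IsFullCompOf G S D) (hDC : Disjoint D C)
    (hE : IsFullCompOf (GCS G C S) S' E) {s₀ : ↥(C ∪ S)} (hs₀ : s₀ ∈ E)
    (hs₀S : (s₀ : V) ∈ S) :
    IsFullCompOf G (Subtype.val '' S') (compOf G (Subtype.val '' S') s₀) := by
  have hs₀S' : (s₀ : V) ∉ Subtype.val '' S' := fun h =>
    Set.disjoint_left.mp hE.1.2.1 hs₀ (Subtype.val_injective.mem_set_image.mp h)
  have hDS' : Disjoint D (Subtype.val '' S') := by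
    refine Set.disjoint_left.mpr fun d hd ⟨t, _, htd⟩ => ?_
    rcases htd ▸ t.2 with h | h
    · exact Set.disjoint_left.mp hDC hd h
    · exact Set.disjoint_left.mp hD.1.2.1 hd h
  have hDB := hD.union_diff_subset_compOf hDS' hs₀S hs₀S'
  have hEB := hE.1.image_val_subset_compOf hs₀ fun v hv => hDB (Or.inr hv)
  refine isFullCompOf_compOf hs₀S' ?_
  rintro _ ⟨t, ht, rfl⟩
  obtain ⟨-, e, he, hadj⟩ := (hE.2 ▸ ht : t ∈ nbhd (GCS G C S) E)
  rcases hadj with hadj | ⟨-, htS, -⟩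
  · exact ⟨e, hEB ⟨e, he, rfl⟩, hadj⟩
  · obtain ⟨-, d, hd, hdt⟩ := (hD.2 ▸ htS : (t : V) ∈ nbhd G D)
    exact ⟨d, hDB (Or.inl hd), hdt⟩

end GCS

theorem stmt9_general {V : Type u} (G : SimpleGraph V) (S C : Set V)
    (hS : IsMinSep G S) (hC : IsCompOf G S C)
    (S' : Set ↥(C ∪ S)) (hS' : IsMinSep (GCS G C S) S') :
    IsMinSep G (Subtype.val '' S') := by
  obtain ⟨E₁, E₂, hne, hE₁, hE₂⟩ := hS'
  wlog hE₁S : ∀ e ∈ E₁, (e : V) ∉ S generalizing E₁ E₂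
  · push Not at hE₁S
    obtain ⟨a, ha, haS⟩ := hE₁S
    exact this E₂ E₁ hne.symm hE₂ hE₁ (hE₁.1.notMem_of_ne hE₂.1 hne ha haS)
  by_cases hE₂S : ∀ e ∈ E₂, (e : V) ∉ S
  · refine ⟨_, _, ?_, hE₁.image_val_of_notMem hC hE₁S, hE₂.image_val_of_notMem hC hE₂S⟩
    exact fun h => hne (Set.image_injective.mpr Subtype.val_injective h)
  · push Not at hE₂S
    obtain ⟨s₀, hs₀, hs₀S⟩ := hE₂S
    obtain ⟨D, hD, hDC⟩ := hS.exists_isFullCompOf_disjoint hC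
    refine ⟨_, _, ?_, hE₁.image_val_of_notMem hC hE₁S,
      isFullCompOf_compOf_of_mem hD hDC hE₂ hs₀ hs₀S⟩
    intro h
    obtain ⟨e, he, hes₀⟩ := h.symm ▸ (mem_compOf_self : (s₀ : V) ∈ compOf G _ _)
    exact hE₁S e he (hes₀ ▸ hs₀S)

/-- Let `S` be a minimal separator of `G` and `C` a component of `G − S`.
Then every minimal separator of `G(C, S)` is also a minimal separator of `G`. -/
theorem stmt9 {V : Type u} [Fintype V] (G : SimpleGraph V) (S C : Set V)
    (hS : IsMinSep G S) (hC : IsCompOf G S C)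
    (S' : Set ↥(C ∪ S)) (hS' : IsMinSep (GCS G C S) S') :
    IsMinSep G (Subtype.val '' S') :=
  stmt9_general G S C hS hC S' hS'
end

section
/- Let S be a clique minimal separator of G and C a full component associated to S. Then every minimal separator of G other than S is a minimal separator of G[C ∪ S] or of G[V \ C]. -/
open SimpleGraph

universe u

/-!
Because `S` is a clique, two distinct full components of `G − T` cannot both meet `S`; let `Y`
be one that misses `S`. It then lies on one side `U ∈ {C ∪ S, V \ C}` of `S`, and every edge
leaving `U` starts in the clique `S`. Hence a walk that leaves `U` can be short-cut by a clique
edge, so for every full component `A` of `G − T` meeting `U`, `A ∩ U` is a full component of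
`G[U] − T`. This gives `Y`, and a second component comes from the other full component `X`,
unless `X` lies outside `U`; then `T ⊊ S`, and the component of `G − T` through a vertex of
`S \ T` is full and meets `U`.
-/

variable {V : Type u} {G : SimpleGraph V}

def BorderedBy (G : SimpleGraph V) (U S : Set V) : Prop :=
  ∀ x ∈ U, ∀ y ∉ U, G.Adj x y → x ∈ S

theorem SimpleGraph.Connected.induce_subset_of_forall_adj {A P : Set V}
    (hA : (G.induce A).Connected) {a : V} (haA : a ∈ A) (haP : a ∈ P)
    (hP : ∀ u ∈ A, ∀ v ∈ A, u ∈ P → G.Adj u v → v ∈ P) : A ⊆ P := by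
  intro x hx
  obtain ⟨p⟩ := hA.preconnected ⟨a, haA⟩ ⟨x, hx⟩
  suffices ∀ {y z : A} (q : (G.induce A).Walk y z), y.1 ∈ P → z.1 ∈ P from this p haP
  intro y z q
  induction q with
  | nil => exact id
  | cons h _ ih => exact fun hy => ih (hP _ (Subtype.property _) _ (Subtype.property _) hy h)

theorem exists_isCompOf_mem (G : SimpleGraph V) {T : Set V} {v : V} (hv : v ∉ T) :
    ∃ D, v ∈ D ∧ IsCompOf G T D := by
  have hpt : ∀ x : V, (G.induce {x}).Connected := fun x =>
    (connected_iff_exists_forall_reachable _).mpr ⟨⟨x, rfl⟩, fun _ => .of_subsingleton⟩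
  set 𝒜 : Set (Set V) := {A | v ∈ A ∧ Disjoint A T ∧ (G.induce A).Connected}
  have hv𝒜 : {v} ∈ 𝒜 := ⟨rfl, Set.disjoint_singleton_left.mpr hv, hpt v⟩
  refine ⟨⋃₀ 𝒜, ⟨_, hv𝒜, rfl⟩, ⟨v, _, hv𝒜, rfl⟩,
    Set.disjoint_sUnion_left.mpr fun A hA => hA.2.1,
    induce_sUnion_connected_of_pairwise_not_disjoint ⟨_, hv𝒜⟩ (fun hA hB => ⟨v, hA.1, hB.1⟩)
      fun hA => hA.2.2, ?_⟩
  rintro x ⟨A, hA, hxA⟩ w hxw hwT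
  exact ⟨A ∪ {w}, ⟨Or.inl hA.1,
    Set.disjoint_union_left.mpr ⟨hA.2.1, Set.disjoint_singleton_left.mpr hwT⟩,
    connected_induce_union hA.2.2.preconnected (hpt w).preconnected hxA rfl hxw⟩, Or.inr rfl⟩

namespace IsCompOf

variable {S T C A D X Y : Set V}

theorem subset_of_connected (hC : IsCompOf G S C) (hA : (G.induce A).Connected)
    (hAS : Disjoint A S) {v : V} (hvA : v ∈ A) (hvC : v ∈ C) : A ⊆ C :=
  hA.induce_subset_of_forall_adj hvA hvC fun u _ w hw hu huw =>
    hC.2.2.2 u hu w huw (Set.disjoint_left.mp hAS hw)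

theorem eq_of_mem_s10 (hX : IsCompOf G T X) (hY : IsCompOf G T Y) {v : V} (hvX : v ∈ X)
    (hvY : v ∈ Y) : X = Y :=
  (hY.subset_of_connected hX.2.2.1 hX.2.1 hvX hvY).antisymm
    (hX.subset_of_connected hY.2.2.1 hY.2.1 hvY hvX)

theorem isFullCompOf (hD : IsCompOf G T D) (hfull : ∀ t ∈ T, ∃ u ∈ D, G.Adj u t) :
    IsFullCompOf G T D := by
  refine ⟨hD, Set.Subset.antisymm ?_ fun t ht => ?_⟩
  · rintro v ⟨hvD, u, hu, huv⟩
    by_contra hvT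
    exact hvD (hD.2.2.2 u hu v huv hvT)
  · obtain ⟨u, hu, hut⟩ := hfull t ht
    exact ⟨fun htD => Set.disjoint_left.mp hD.2.1 htD ht, u, hu, hut⟩

theorem borderedBy_union (hC : IsCompOf G S C) : BorderedBy G (C ∪ S) S := by
  rintro x (hxC | hxS) y hy hxy
  · exact absurd (Or.inl (hC.2.2.2 x hxC y hxy fun hyS => hy (Or.inr hyS))) hy
  · exact hxS

end IsCompOf

namespace BorderedBy

variable {U S A : Set V}

theorem exists_mem_inter (hU : BorderedBy G U S) (hA : (G.induce A).Connected) {a b : V}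
    (ha : a ∈ A ∩ U) (hbA : b ∈ A) (hbU : b ∉ U) : ∃ s ∈ A ∩ U, s ∈ S := by
  by_contra! hAS
  refine hbU (hA.induce_subset_of_forall_adj ha.1 ha.2 (fun x hx y _ hxU hxy => ?_) hbA)
  by_contra hyU
  exact hAS x ⟨hx, hxU⟩ (hU x hxU y hyU hxy)

theorem connected_induce_inter (hU : BorderedBy G U S) (hS : G.IsClique S)
    (hA : (G.induce A).Connected) (hne : (A ∩ U).Nonempty) :
    (G.induce (A ∩ U)).Connected := by
  by_cases hAU : A ⊆ U
  · rwa [Set.inter_eq_left.mpr hAU]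
  obtain ⟨b, hbA, hbU⟩ := Set.not_subset.mp hAU
  obtain ⟨a, ha⟩ := hne
  obtain ⟨s₀, hs₀, hs₀S⟩ := hU.exists_mem_inter hA ha hbA hbU
  let R : Set V := {v | ∀ hv : v ∈ A ∩ U, (G.induce (A ∩ U)).Reachable ⟨s₀, hs₀⟩ ⟨v, hv⟩}
  have hAR : A ⊆ R := hA.induce_subset_of_forall_adj hs₀.1 (fun _ => .rfl)
    fun u huA v _ hu huv hv => by
      by_cases huU : u ∈ U
      · exact (hu ⟨huA, huU⟩).trans
          (show (G.induce (A ∩ U)).Adj ⟨u, huA, huU⟩ ⟨v, hv⟩ from huv).reachable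
      -- `v` is where the walk re-enters `U`, so `v ∈ S` is joined to `s₀` by a clique edge
      have hvS : v ∈ S := hU v hv.2 u huU huv.symm
      by_cases e : s₀ = v
      · subst e; rfl
      · exact (show (G.induce (A ∩ U)).Adj ⟨s₀, hs₀⟩ ⟨v, hv⟩ from hS hs₀S hvS e).reachable
  exact (connected_iff_exists_forall_reachable _).mpr ⟨⟨s₀, hs₀⟩, fun v => hAR v.2.1 v.2⟩

end BorderedBy

theorem isCompOf_induce {U T A : Set V} (hne : (A ∩ U).Nonempty) (hAT : Disjoint A T)
    (hconn : (G.induce (A ∩ U)).Connected)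
    (hcl : ∀ u ∈ A, ∀ v ∈ U, G.Adj u v → v ∉ T → v ∈ A) :
    IsCompOf (G.induce U) (Subtype.val ⁻¹' T) (Subtype.val ⁻¹' A) := by
  obtain ⟨a, haA, haU⟩ := hne
  let e : (G.induce U).induce (Subtype.val ⁻¹' A) ≃g G.induce (A ∩ U) :=
    ⟨⟨fun x => ⟨x.1.1, x.2, x.1.2⟩, fun y => ⟨⟨y.1, y.2.2⟩, y.2.1⟩, fun _ => rfl, fun _ => rfl⟩,
      Iff.rfl⟩
  exact ⟨⟨⟨a, haU⟩, haA⟩, Set.disjoint_left.mpr fun x hxA hxT => Set.disjoint_left.mp hAT hxA hxT,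
    e.connected_iff.mpr hconn, fun _ hx y hxy hyT => hcl _ hx y y.2 hxy hyT⟩

namespace IsFullCompOf

variable {S T C A X Y U : Set V}

theorem exists_adj (hA : IsFullCompOf G T A) {t : V} (ht : t ∈ T) : ∃ u ∈ A, G.Adj u t :=
  (hA.2.symm ▸ ht : t ∈ nbhd G A).2

theorem borderedBy_compl (hC : IsFullCompOf G S C) : BorderedBy G Cᶜ S :=
  fun _ hx y hy hxy => hC.2 ▸ ⟨hx, y, not_not.mp hy, hxy.symm⟩

theorem disjoint_of_isClique (hX : IsFullCompOf G T X) (hY : IsFullCompOf G T Y) (hXY : X ≠ Y)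
    (hS : G.IsClique S) {s : V} (hsX : s ∈ X) (hsS : s ∈ S) : Disjoint Y S := by
  refine Set.disjoint_left.mpr fun y hyY hyS => ?_
  have hyX : y ∉ X := fun hyX => hXY (hX.1.eq_of_mem_s10 hY.1 hyX hyY)
  have hsy : s ≠ y := fun e => hyX (e ▸ hsX)
  have hyT : y ∈ T := hX.2 ▸ ⟨hyX, s, hsX, hS hsS hyS hsy⟩
  exact Set.disjoint_left.mp hY.1.2.1 hyY hyT

theorem isFullCompOf_induce (hA : IsFullCompOf G T A) (hU : BorderedBy G U S)
    (hS : G.IsClique S) (hne : (A ∩ U).Nonempty) :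
    IsFullCompOf (G.induce U) (Subtype.val ⁻¹' T) (Subtype.val ⁻¹' A) := by
  refine (isCompOf_induce hne hA.1.2.1 (hU.connected_induce_inter hS hA.1.2.2.1 hne)
    fun u hu v _ => hA.1.2.2.2 u hu v).isFullCompOf ?_
  rintro ⟨t, htU⟩ ht
  obtain ⟨a, haA, hat⟩ := hA.exists_adj ht
  by_cases haU : a ∈ U
  · exact ⟨⟨a, haU⟩, haA, hat⟩
  obtain ⟨b, hb⟩ := hne
  obtain ⟨s, hs, hsS⟩ := hU.exists_mem_inter hA.1.2.2.1 hb haA haU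
  have htS : t ∈ S := hU t htU a haU hat.symm
  have hst : s ≠ t := fun e => Set.disjoint_left.mp hA.1.2.1 hs.1 (e ▸ ht)
  exact ⟨⟨s, hs.2⟩, hs.1, hS hsS htS hst⟩

end IsFullCompOf

theorem isMinSep_induce_of_borderedBy {S T X Y U : Set V} (hU : BorderedBy G U S)
    (hS : G.IsClique S) (hSU : S ⊆ U) (hX : IsFullCompOf G T X) (hY : IsFullCompOf G T Y)
    (hXY : X ≠ Y) (hYU : Y ⊆ U) (hYS : Disjoint Y S) (hTS : T ≠ S) :
    T ⊆ U ∧ IsMinSep (G.induce U) (Subtype.val ⁻¹' T) := by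
  have hTU : T ⊆ U := fun t ht => by
    obtain ⟨y, hy, hyt⟩ := hY.exists_adj ht
    by_contra htU
    exact Set.disjoint_left.mp hYS hy (hU y (hYU hy) t htU hyt)
  obtain ⟨y, hy⟩ := hY.1.1
  refine ⟨hTU, ?_⟩
  suffices ∃ D x, IsFullCompOf G T D ∧ x ∈ D ∩ U ∧ x ∉ Y by
    obtain ⟨D, x, hD, hx, hxY⟩ := this
    exact ⟨_, _, fun e => hxY ((Set.ext_iff.mp e ⟨x, hx.2⟩).mp hx.1),
      hD.isFullCompOf_induce hU hS ⟨x, hx⟩, hY.isFullCompOf_induce hU hS ⟨y, hy, hYU hy⟩⟩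
  by_cases hXU : (X ∩ U).Nonempty
  · obtain ⟨x, hx⟩ := hXU
    exact ⟨X, x, hX, hx, fun hxY => hXY (hX.1.eq_of_mem_s10 hY.1 hx.1 hxY)⟩
  have hTS' : T ⊆ S := fun t ht => by
    obtain ⟨x, hx, hxt⟩ := hX.exists_adj ht
    exact hU t (hTU ht) x (fun hxU => hXU ⟨x, hx, hxU⟩) hxt.symm
  obtain ⟨s, hsS, hsT⟩ := Set.exists_of_ssubset (hTS'.ssubset_of_ne hTS)
  obtain ⟨D, hsD, hD⟩ := exists_isCompOf_mem G hsT
  exact ⟨D, s, hD.isFullCompOf fun t ht => ⟨s, hsD, hS hsS (hTS' ht) fun e => hsT (e ▸ ht)⟩,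
    ⟨hsD, hSU hsS⟩, fun hsY => Set.disjoint_left.mp hYS hsY hsS⟩

theorem stmt10_general {V : Type u} (G : SimpleGraph V) (S C : Set V)
    (hclique : G.IsClique S) (hC : IsFullCompOf G S C)
    (T : Set V) (hT : IsMinSep G T) (hTS : T ≠ S) :
    (T ⊆ C ∪ S ∧ IsMinSep (G.induce (C ∪ S)) (Subtype.val ⁻¹' T)) ∨
    (T ⊆ Cᶜ ∧ IsMinSep (G.induce Cᶜ) (Subtype.val ⁻¹' T)) := by
  obtain ⟨X, Y, hXY, hX, hY⟩ := hT
  wlog hYS : Disjoint Y S generalizing X Y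
  · obtain ⟨s, hsY, hsS⟩ := Set.not_disjoint_iff.mp hYS
    exact this Y X hXY.symm hY hX (hY.disjoint_of_isClique hX hXY.symm hclique hsY hsS)
  by_cases hYC : (Y ∩ C).Nonempty
  · obtain ⟨y, hyY, hyC⟩ := hYC
    have hYC : Y ⊆ C := hC.1.subset_of_connected hY.1.2.2.1 hYS hyY hyC
    exact .inl <| isMinSep_induce_of_borderedBy hC.1.borderedBy_union hclique
      Set.subset_union_right hX hY hXY (hYC.trans Set.subset_union_left) hYS hTS
  · exact .inr <| isMinSep_induce_of_borderedBy hC.borderedBy_compl hclique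
      hC.1.2.1.symm.subset_compl_right hX hY hXY
      (fun y hyY hyC => hYC ⟨y, hyY, hyC⟩) hYS hTS

/-- Let `S` be a clique minimal separator of `G` and `C` a full component associated
to `S`. Then every minimal separator of `G` other than `S` is a minimal separator of
`G[C ∪ S]` or of `G[V \ C]`. -/
theorem stmt10 {V : Type u} [Fintype V] (G : SimpleGraph V) (S C : Set V)
    (hS : IsMinSep G S) (hclique : G.IsClique S) (hC : IsFullCompOf G S C)
    (T : Set V) (hT : IsMinSep G T) (hTS : T ≠ S) :
    (T ⊆ C ∪ S ∧ IsMinSep (G.induce (C ∪ S)) (Subtype.val ⁻¹' T)) ∨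
    (T ⊆ Cᶜ ∧ IsMinSep (G.induce Cᶜ) (Subtype.val ⁻¹' T)) :=
  stmt10_general G S C hclique hC T hT hTS
end
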